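/- arXiv:1302.7025 — 2 statements merged into one kernel-verified Lean document; each statement's English description precedes it below -/
import Mathlib

section
/- With the acceptance probability ap(v, R) defined recursively on a finite in-arborescence (ap(v,R)=1 for v ∈ S; ap(v,R)=0 for leaves not in S; otherwise ap(v,R) = 1 − ∏_{u child of v, u ∈ R ∪ S}(1 − ap(u,R)·w_{u,v}) if v ∈ R ∪ S, and 0 if v ∉ R ∪ S), the function is monotone in R: if R ⊆ R′ then ap(v, R) ≤ ap(v, R′) for every node v. -/
structure Arb (V : Type) [DecidableEq V] where
  children : V → Finset V
  height : V → ℕ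
  hlt : ∀ v : V, ∀ u ∈ children v, height u < height v
  w : V → V → ℝ
  hw0 : ∀ u v : V, 0 ≤ w u v
  hw1 : ∀ u v : V, w u v ≤ 1
  S : Finset V
  hS : ∀ v ∈ S, children v = ∅

variable {V : Type} [DecidableEq V]

def ap (T : Arb V) (R : Finset V) (v : V) : ℝ :=
  if v ∈ T.S then 1
  else if v ∈ R ∧ T.children v ≠ ∅ then
    1 - ∏ u ∈ (T.children v).attach,
      (if (u : V) ∈ R ∪ T.S then 1 - ap T R u.1 * T.w u.1 v else 1)
  else 0
termination_by T.height v
decreasing_by exact T.hlt v u.1 u.2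

lemma ap_mem_Icc (T : Arb V) (R : Finset V) (v : V) :
    0 ≤ ap T R v ∧ ap T R v ≤ 1 := by
  suffices h : ∀ n : ℕ, ∀ v : V, T.height v < n → 0 ≤ ap T R v ∧ ap T R v ≤ 1 from
    h (T.height v + 1) v (Nat.lt_succ_self _)
  intro n
  induction n with
  | zero => intro v hv; omega
  | succ n ih =>
    intro v hv
    rw [ap]
    split
    · norm_num
    · split
      · constructor
        · have : (∏ u ∈ (T.children v).attach,
              (if (u : V) ∈ R ∪ T.S then 1 - ap T R u.1 * T.w u.1 v else 1)) ≤ 1 := by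
            apply Finset.prod_le_one
            · intro u _
              split
              · have h := ih u.1 (by have := T.hlt v u.1 u.2; omega)
                nlinarith [T.hw0 u.1 v, T.hw1 u.1 v]
              · norm_num
            · intro u _
              split
              · have h := ih u.1 (by have := T.hlt v u.1 u.2; omega)
                nlinarith [T.hw0 u.1 v, T.hw1 u.1 v]
              · norm_num
          linarith
        · have : (0:ℝ) ≤ ∏ u ∈ (T.children v).attach,
              (if (u : V) ∈ R ∪ T.S then 1 - ap T R u.1 * T.w u.1 v else 1) := by
            apply Finset.prod_nonneg
            intro u _
            split
            · have h := ih u.1 (by have := T.hlt v u.1 u.2; omega)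
              nlinarith [T.hw0 u.1 v, T.hw1 u.1 v]
            · norm_num
          linarith
      · norm_num

/-- ap is monotone in the selected set R. -/
theorem apm_ap_monotone_in_R (T : Arb V) (R R' : Finset V)
    (hR : ∀ u ∈ R, u ∉ T.S) (hR' : ∀ u ∈ R', u ∉ T.S)
    (hsub : R ⊆ R') :
    ∀ v : V, ap T R v ≤ ap T R' v := by
  suffices h : ∀ n : ℕ, ∀ v : V, T.height v < n → ap T R v ≤ ap T R' v from
    fun v => h (T.height v + 1) v (Nat.lt_succ_self _)
  intro n
  induction n with
  | zero => intro v hv; omega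
  | succ n ih =>
    intro v hv
    rw [ap, ap]
    split
    · exact le_refl 1
    · split
      · rename_i hS hvR
        have hvR' : v ∈ R' ∧ T.children v ≠ ∅ := ⟨hsub hvR.1, hvR.2⟩
        rw [if_pos hvR']
        have hprod : (∏ u ∈ (T.children v).attach,
            (if (u : V) ∈ R' ∪ T.S then 1 - ap T R' u.1 * T.w u.1 v else 1)) ≤
            ∏ u ∈ (T.children v).attach,
            (if (u : V) ∈ R ∪ T.S then 1 - ap T R u.1 * T.w u.1 v else 1) := by
          apply Finset.prod_le_prod
          · intro u _
            split
            · have h := ap_mem_Icc T R' u.1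
              nlinarith [T.hw0 u.1 v, T.hw1 u.1 v]
            · norm_num
          · intro u _
            by_cases hu : (u : V) ∈ R ∪ T.S
            · have hu' : (u : V) ∈ R' ∪ T.S := by
                rcases Finset.mem_union.1 hu with h | h
                · exact Finset.mem_union_left _ (hsub h)
                · exact Finset.mem_union_right _ h
              rw [if_pos hu, if_pos hu']
              have hih := ih u.1 (by have := T.hlt v u.1 u.2; omega)
              nlinarith [T.hw0 u.1 v]
            · rw [if_neg hu]
              split
              · have h := ap_mem_Icc T R' u.1
                nlinarith [T.hw0 u.1 v, T.hw1 u.1 v]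
              · exact le_refl 1
        linarith
      · split
        · have hle : (∏ u ∈ (T.children v).attach,
              (if (u : V) ∈ R' ∪ T.S then 1 - ap T R' u.1 * T.w u.1 v else 1)) ≤ 1 := by
            apply Finset.prod_le_one
            · intro u _
              split
              · have h := ap_mem_Icc T R' u.1
                nlinarith [T.hw0 u.1 v, T.hw1 u.1 v]
              · norm_num
            · intro u _
              split
              · have h := ap_mem_Icc T R' u.1
                nlinarith [T.hw0 u.1 v, T.hw1 u.1 v]
              · norm_num
          linarith
        · exact le_refl 0
end

section
/- In a finite rooted in-arborescence with root t, if the selected set R contains no directed path of selected nodes from some seed leaf to t (i.e., for every seed u ∈ S, the directed path from u to t in the tree contains a non-seed node outside R), then ap(t, R) = 0. -/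
variable {V : Type} [DecidableEq V]

/-- if for every seed leaf u there is no directed path of the
tree from u to t all of whose nodes after u are selected or seeds (i.e., the
tree-path from every seed to t contains a non-seed node outside R), then the
acceptance probability of t is 0. -/
theorem apm_no_selected_path_zero (T : Arb V) (R : Finset V) (t : V)
    (hR : ∀ u ∈ R, u ∉ T.S)
    (hpath : ∀ u ∈ T.S,
      ¬ Relation.ReflTransGen
          (fun a b : V => a ∈ T.children b ∧ (b ∈ R ∨ b ∈ T.S)) u t) :
    ap T R t = 0 := by
  suffices h : ∀ n t, T.height t = n →
      (∀ u ∈ T.S,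
        ¬ Relation.ReflTransGen
            (fun a b : V => a ∈ T.children b ∧ (b ∈ R ∨ b ∈ T.S)) u t) →
      ap T R t = 0 from h _ t rfl hpath
  intro n
  induction n using Nat.strong_induction_on with
  | _ n ih =>
    intro t hn hpath
    rw [ap]
    by_cases hts : t ∈ T.S
    · exact absurd Relation.ReflTransGen.refl (hpath t hts)
    rw [if_neg hts]
    by_cases htR : t ∈ R ∧ T.children t ≠ ∅
    · rw [if_pos htR]
      have hall : ∀ u ∈ (T.children t).attach,
          (if (u : V) ∈ R ∪ T.S then 1 - ap T R u.1 * T.w u.1 t else 1) = 1 := by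
        intro u _
        by_cases hu : (u : V) ∈ R ∪ T.S
        · rw [if_pos hu]
          have huS : (u : V) ∉ T.S := fun huS =>
            hpath u huS (Relation.ReflTransGen.single ⟨u.2, Or.inl htR.1⟩)
          have hap : ap T R u.1 = 0 :=
            ih (T.height u.1) (hn ▸ T.hlt t u.1 u.2) u.1 rfl
              (fun s hs hrel => hpath s hs (hrel.tail ⟨u.2, Or.inl htR.1⟩))
          rw [hap]; ring
        · rw [if_neg hu]
      rw [Finset.prod_congr rfl hall, Finset.prod_const_one]; ring
    · rw [if_neg htR]
end
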